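/- For every y = (y₁, y₂, y₃) ∈ ℝ³, the symmetric 3×3 matrix T(y) with rows [y₁² + y₂², −y₁y₂, −y₁y₃], [−y₁y₂, y₂² + y₃², −y₂y₃], [−y₁y₃, −y₂y₃, y₃² + y₁²] is positive semi-definite. -/

import Mathlib

/-!
`T(y)` is positive semi-definite by the Sylvester-type criterion coming from its `LDLᵀ`
decomposition: when `y 1 ≠ 0` its leading minors `y₀² + y₁²` and `y₁⁴ + y₀²y₂² + y₁²y₂²` are
positive, and its determinant `y₀⁴y₂² + y₀²y₁⁴ + y₁²y₂⁴ − 3y₀²y₁²y₂²` is nonnegative by the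
AM–GM inequality for the three terms `y₀⁴y₂², y₀²y₁⁴, y₁²y₂⁴` (this sextic is not a sum of
squares, so AM–GM is where the content lies). When `y 1 = 0` the quadratic form of `T(y)` is
visibly a sum of squares.
-/

/-- The y-matrix `T(y)` of the quadratic form
`Q(ξ) = ξ₁₁² + ξ₂₂² + ξ₃₃² − 2ξ₁₁ξ₂₂ − 2ξ₂₂ξ₃₃ − 2ξ₃₃ξ₁₁ + ξ₁₂² + ξ₂₃² + ξ₃₁²`. -/
def Tmat (y : Fin 3 → ℝ) : Matrix (Fin 3) (Fin 3) ℝ :=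
  !![y 0 ^ 2 + y 1 ^ 2, -(y 0 * y 1), -(y 0 * y 2);
     -(y 0 * y 1), y 1 ^ 2 + y 2 ^ 2, -(y 1 * y 2);
     -(y 0 * y 2), -(y 1 * y 2), y 2 ^ 2 + y 0 ^ 2]

open Matrix

theorem three_mul_le_cyclic {p q r : ℝ} (hp : 0 ≤ p) (hq : 0 ≤ q) (hr : 0 ≤ r) :
    3 * (p * q * r) ≤ p ^ 2 * r + p * q ^ 2 + q * r ^ 2 := by
  nlinarith [mul_nonneg hr (sq_nonneg (p - q)), mul_nonneg hq (sq_nonneg (p - r)),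
    mul_nonneg hp (sq_nonneg (q - r))]

theorem Matrix.dotProduct_mulVec_fin_three {R : Type*} [CommSemiring R]
    (A : Matrix (Fin 3) (Fin 3) R) (x : Fin 3 → R) :
    x ⬝ᵥ A *ᵥ x = x 0 * (A 0 0 * x 0 + A 0 1 * x 1 + A 0 2 * x 2)
      + x 1 * (A 1 0 * x 0 + A 1 1 * x 1 + A 1 2 * x 2)
      + x 2 * (A 2 0 * x 0 + A 2 1 * x 1 + A 2 2 * x 2) := by
  simp [dotProduct, mulVec, Fin.sum_univ_three]

theorem Matrix.posSemidef_of_fin_three {A : Matrix (Fin 3) (Fin 3) ℝ} (hA : A.IsHermitian)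
    (h₁ : 0 < A 0 0) (h₂ : 0 < A 0 0 * A 1 1 - A 0 1 ^ 2) (h₃ : 0 ≤ A.det) :
    A.PosSemidef := by
  refine posSemidef_iff_dotProduct_mulVec.2 ⟨hA, fun x => ?_⟩
  have h10 : A 1 0 = A 0 1 := hA.apply 0 1
  have h20 : A 2 0 = A 0 2 := hA.apply 0 2
  have h21 : A 2 1 = A 1 2 := hA.apply 1 2
  simp only [star_trivial, dotProduct_mulVec_fin_three, h10, h20, h21]
  set d₂ := A 0 0 * A 1 1 - A 0 1 ^ 2
  -- the `LDLᵀ` decomposition of `A`, cleared of denominators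
  have ldl : A 0 0 * d₂ * (x 0 * (A 0 0 * x 0 + A 0 1 * x 1 + A 0 2 * x 2)
      + x 1 * (A 0 1 * x 0 + A 1 1 * x 1 + A 1 2 * x 2)
      + x 2 * (A 0 2 * x 0 + A 1 2 * x 1 + A 2 2 * x 2)) =
      d₂ * (A 0 0 * x 0 + A 0 1 * x 1 + A 0 2 * x 2) ^ 2
      + (d₂ * x 1 + (A 0 0 * A 1 2 - A 0 1 * A 0 2) * x 2) ^ 2 + A 0 0 * A.det * x 2 ^ 2 := by
    rw [det_fin_three, h10, h20, h21]; ring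
  exact nonneg_of_mul_nonneg_right (ldl ▸ by positivity) (mul_pos h₁ h₂)

theorem Tmat_isHermitian (y : Fin 3 → ℝ) : (Tmat y).IsHermitian := by
  ext i j
  fin_cases i <;> fin_cases j <;> simp [Tmat]

theorem Tmat_det (y : Fin 3 → ℝ) : (Tmat y).det =
    y 0 ^ 2 * (y 1 ^ 2) ^ 2 + (y 0 ^ 2) ^ 2 * y 2 ^ 2 + y 1 ^ 2 * (y 2 ^ 2) ^ 2
      - 3 * (y 0 ^ 2 * y 1 ^ 2 * y 2 ^ 2) := by
  simp [Tmat, det_fin_three]; ring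

theorem Tmat_det_nonneg (y : Fin 3 → ℝ) : 0 ≤ (Tmat y).det := by
  rw [Tmat_det]
  linarith [three_mul_le_cyclic (sq_nonneg (y 0)) (sq_nonneg (y 1)) (sq_nonneg (y 2))]

theorem Tmat_posSemidef_of_apply_one_eq_zero {y : Fin 3 → ℝ} (hy : y 1 = 0) :
    (Tmat y).PosSemidef := by
  refine posSemidef_iff_dotProduct_mulVec.2 ⟨Tmat_isHermitian y, fun x => ?_⟩
  have sos : star x ⬝ᵥ Tmat y *ᵥ x =
      (y 0 * x 0 - y 2 * x 2) ^ 2 + (y 2 * x 1) ^ 2 + (y 0 * x 2) ^ 2 := by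
    rw [star_trivial, dotProduct_mulVec_fin_three]
    simp [Tmat, hy]; ring
  rw [sos]; positivity

/-- for every `y ∈ ℝ³` the matrix `T(y)` is positive semi-definite. -/
theorem Tmat_posSemidef : ∀ y : Fin 3 → ℝ, (Tmat y).PosSemidef := by
  intro y
  rcases eq_or_ne (y 1) 0 with hy | hy
  · exact Tmat_posSemidef_of_apply_one_eq_zero hy
  · refine posSemidef_of_fin_three (Tmat_isHermitian y) ?_ ?_ (Tmat_det_nonneg y)
    · simp [Tmat]; positivity
    · have hd₂ : (Tmat y) 0 0 * (Tmat y) 1 1 - (Tmat y) 0 1 ^ 2 =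
          (y 1 ^ 2) ^ 2 + y 0 ^ 2 * y 2 ^ 2 + y 1 ^ 2 * y 2 ^ 2 := by
        simp [Tmat]; ring
      rw [hd₂]; positivity
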